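/- arXiv:2201.08492 — 2 statements merged into one kernel-verified Lean document; each statement's English description precedes it below -/
import Mathlib

section
/- Let y_1,...,y_N be real numbers with y_i ≠ y_j for some i,j, and let H be the open interval (min_i y_i, max_i y_i). Then the function μ ↦ log L(μ) is strictly concave on H, where L(μ) = sup{∏_{i=1}^N w_i : ∑ w_i y_i = μ, w_i > 0, ∑ w_i = 1}. -/
/-!
For `μ` strictly between `min y` and `max y` the product `∏ w k` attains its supremum over the
compact set of nonnegative weights with sum `1` and mean `μ`, and the maximiser has no zero
coordinate, so `L μ = ∏ w k` for some positive weights `w` of mean `μ`. If `w₁`, `w₂` are such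
maximisers for `μ₁ ≠ μ₂`, then `a • w₁ + b • w₂` is admissible for `a • μ₁ + b • μ₂`, and
strict concavity of `w ↦ ∑ k, log (w k)` (note `w₁ ≠ w₂` as their means differ) gives
`a log L μ₁ + b log L μ₂ < ∑ k, log ((a • w₁ + b • w₂) k) ≤ log L (a • μ₁ + b • μ₂)`.
-/

open Finset Real

section

variable {ι : Type*} [Fintype ι]

def IsMeanWeight (y : ι → ℝ) (μ : ℝ) (w : ι → ℝ) : Prop :=
  (∀ k, 0 < w k) ∧ ∑ k, w k = 1 ∧ ∑ k, w k * y k = μ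

theorem IsMeanWeight.combo {y w₁ w₂ : ι → ℝ} {μ₁ μ₂ : ℝ} (h₁ : IsMeanWeight y μ₁ w₁)
    (h₂ : IsMeanWeight y μ₂ w₂) {a b : ℝ} (ha : 0 ≤ a) (hb : 0 ≤ b) (hab : a + b = 1) :
    IsMeanWeight y (a • μ₁ + b • μ₂) (a • w₁ + b • w₂) := by
  obtain ⟨hw₁, hs₁, hm₁⟩ := h₁
  obtain ⟨hw₂, hs₂, hm₂⟩ := h₂
  refine ⟨fun k => convex_Ioi (0 : ℝ) (hw₁ k) (hw₂ k) ha hb hab, ?_, ?_⟩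
  · simp [sum_add_distrib, ← mul_sum, hs₁, hs₂, hab]
  · simp only [Pi.add_apply, Pi.smul_apply, smul_eq_mul, add_mul, mul_assoc, sum_add_distrib,
      ← mul_sum, hm₁, hm₂]

theorem exists_pos_weights_mean_lt (y : ι → ℝ) {m : ι} {μ : ℝ} (h : y m < μ) :
    ∃ w : ι → ℝ, (∀ k, 0 < w k) ∧ ∑ k, w k = 1 ∧ ∑ k, w k * y k < μ := by
  classical
  have hn : (0 : ℝ) < Fintype.card ι := Nat.cast_pos.2 (Fintype.card_pos_iff.2 ⟨m⟩)
  -- perturb the point mass at `m` towards the uniform weights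
  let w : ℝ → ι → ℝ := fun ε k => (1 - ε) * (Pi.single m 1 : ι → ℝ) k + ε / Fintype.card ι
  have hcont : Continuous fun ε => ∑ k, w ε k * y k := by fun_prop
  have h0 : ∑ k, w 0 k * y k = y m := by simp [w, Pi.single_apply]
  obtain ⟨ε, hε, hε0, hε1⟩ : ∃ ε, ∑ k, w ε k * y k < μ ∧ 0 < ε ∧ ε < 1 :=
    ((((hcont.tendsto 0).eventually (gt_mem_nhds (h0 ▸ h))).filter_mono
      nhdsWithin_le_nhds).and (Ioo_mem_nhdsGT one_pos)).exists
  refine ⟨w ε, fun k => ?_, ?_, hε⟩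
  · have : 0 ≤ (Pi.single m 1 : ι → ℝ) k :=
      (Pi.single_nonneg (α := fun _ => ℝ)).2 zero_le_one k
    have : 0 < ε / Fintype.card ι := by positivity
    simp only [w]
    nlinarith
  · simp [w, sum_add_distrib, ← mul_sum]
    field_simp
    ring

theorem exists_isMeanWeight_of_lt_of_lt (y : ι → ℝ) {m M : ι} {μ : ℝ} (hm : y m < μ)
    (hM : μ < y M) : ∃ w, IsMeanWeight y μ w := by
  obtain ⟨p, hp, hp₁, hpμ⟩ := exists_pos_weights_mean_lt y hm
  obtain ⟨q, hq, hq₁, hqμ⟩ := exists_pos_weights_mean_lt (-y) (m := M) (μ := -μ) (by simpa)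
  simp only [Pi.neg_apply, mul_neg, sum_neg_distrib, neg_lt_neg_iff] at hqμ
  have hμ : μ ∈ segment ℝ (∑ k, p k * y k) (∑ k, q k * y k) := by
    rw [segment_eq_Icc (hpμ.trans hqμ).le]
    exact ⟨hpμ.le, hqμ.le⟩
  obtain ⟨a, b, ha, hb, hab, rfl⟩ := hμ
  exact ⟨_, IsMeanWeight.combo ⟨hp, hp₁, rfl⟩ ⟨hq, hq₁, rfl⟩ ha hb hab⟩

theorem exists_isMeanWeight_isGreatest_prod {y : ι → ℝ} {μ : ℝ} (h : ∃ w, IsMeanWeight y μ w) :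
    ∃ w, IsMeanWeight y μ w ∧
      IsGreatest ((fun v => ∏ k, v k) '' {v | IsMeanWeight y μ v}) (∏ k, w k) := by
  obtain ⟨w₀, hw₀⟩ := h
  set K := stdSimplex ℝ ι ∩ {v | ∑ k, v k * y k = μ}
  have hK : IsCompact K :=
    (isCompact_stdSimplex ℝ ι).inter_right (isClosed_eq (by fun_prop) continuous_const)
  have hw₀K : w₀ ∈ K := ⟨⟨fun k => (hw₀.1 k).le, hw₀.2.1⟩, hw₀.2.2⟩
  obtain ⟨w, ⟨⟨hw, hw₁⟩, hwμ⟩, hmax⟩ :=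
    hK.exists_isMaxOn ⟨w₀, hw₀K⟩ (f := fun v => ∏ k, v k) (by fun_prop)
  have hprod : 0 < ∏ k, w k :=
    (prod_pos fun k _ => hw₀.1 k).trans_le (hmax hw₀K)
  have hpos : ∀ k, 0 < w k := fun k =>
    (hw k).lt_of_ne' fun h => hprod.ne' (prod_eq_zero (mem_univ k) h)
  refine ⟨w, ⟨hpos, hw₁, hwμ⟩, ⟨w, ⟨hpos, hw₁, hwμ⟩, rfl⟩, ?_⟩
  rintro _ ⟨v, ⟨hv, hv₁, hvμ⟩, rfl⟩
  exact hmax ⟨⟨fun k => (hv k).le, hv₁⟩, hvμ⟩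

theorem exists_isMeanWeight_isGreatest_prod_of_mem_Ioo (y : ι → ℝ)
    (hne : (univ : Finset ι).Nonempty) {μ : ℝ}
    (hμ : μ ∈ Set.Ioo (univ.inf' hne y) (univ.sup' hne y)) :
    ∃ w, IsMeanWeight y μ w ∧
      IsGreatest ((fun v => ∏ k, v k) '' {v | IsMeanWeight y μ v}) (∏ k, w k) := by
  obtain ⟨m, -, hm⟩ := exists_mem_eq_inf' hne y
  obtain ⟨M, -, hM⟩ := exists_mem_eq_sup' hne y
  exact exists_isMeanWeight_isGreatest_prod
    (exists_isMeanWeight_of_lt_of_lt y (hm ▸ hμ.1) (hM ▸ hμ.2))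

theorem strictConcaveOn_sum_log :
    StrictConcaveOn ℝ {w : ι → ℝ | ∀ k, 0 < w k} fun w => ∑ k, log (w k) := by
  refine ⟨fun w₁ hw₁ w₂ hw₂ a b ha hb hab k => convex_Ioi (0 : ℝ) (hw₁ k) (hw₂ k) ha hb hab,
    fun w₁ hw₁ w₂ hw₂ hne a b ha hb hab => ?_⟩
  obtain ⟨k₀, hk₀⟩ := Function.ne_iff.1 hne
  simp only [smul_eq_mul, mul_sum, ← sum_add_distrib]
  refine sum_lt_sum (fun k _ => ?_) ⟨k₀, mem_univ _, ?_⟩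
  · exact strictConcaveOn_log_Ioi.concaveOn.2 (hw₁ k) (hw₂ k) ha.le hb.le hab
  · exact strictConcaveOn_log_Ioi.2 (hw₁ k₀) (hw₂ k₀) hk₀ ha hb hab

end

theorem stmt2_general (N : ℕ) (y : Fin N → ℝ) (i : Fin N)
    (L : ℝ → ℝ)
    (hL : ∀ μ, L μ = sSup {x : ℝ | ∃ w : Fin N → ℝ,
      (∀ k, 0 < w k) ∧ ∑ k, w k = 1 ∧ ∑ k, w k * y k = μ ∧ x = ∏ k, w k}) :
    StrictConcaveOn ℝ
      (Set.Ioo (Finset.univ.inf' ⟨i, Finset.mem_univ i⟩ y)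
               (Finset.univ.sup' ⟨i, Finset.mem_univ i⟩ y))
      (fun μ => Real.log (L μ)) := by
  have hL' : ∀ μ, L μ = sSup ((fun v => ∏ k, v k) '' {v | IsMeanWeight y μ v}) := by
    intro μ
    rw [hL]
    congr 1
    ext x
    simp [IsMeanWeight, and_assoc, eq_comm]
  have hlog_prod {w : Fin N → ℝ} (hw : ∀ k, 0 < w k) : log (∏ k, w k) = ∑ k, log (w k) :=
    log_prod fun k _ => (hw k).ne'
  refine ⟨convex_Ioo _ _, fun μ₁ hμ₁ μ₂ hμ₂ hne a b ha hb hab => ?_⟩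
  obtain ⟨w₁, hw₁, hg₁⟩ := exists_isMeanWeight_isGreatest_prod_of_mem_Ioo y _ hμ₁
  obtain ⟨w₂, hw₂, hg₂⟩ := exists_isMeanWeight_isGreatest_prod_of_mem_Ioo y _ hμ₂
  obtain ⟨w, -, hg⟩ := exists_isMeanWeight_isGreatest_prod_of_mem_Ioo y _
    (convex_Ioo _ _ hμ₁ hμ₂ ha.le hb.le hab)
  have hw : w₁ ≠ w₂ := by
    rintro rfl
    exact hne (hw₁.2.2.symm.trans hw₂.2.2)
  have hmix := hw₁.combo hw₂ ha.le hb.le hab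
  calc a • log (L μ₁) + b • log (L μ₂) = a • ∑ k, log (w₁ k) + b • ∑ k, log (w₂ k) := by
        rw [hL', hg₁.csSup_eq, hL', hg₂.csSup_eq, hlog_prod hw₁.1, hlog_prod hw₂.1]
    _ < ∑ k, log ((a • w₁ + b • w₂) k) := strictConcaveOn_sum_log.2 hw₁.1 hw₂.1 hw ha hb hab
    _ = log (∏ k, (a • w₁ + b • w₂) k) := (hlog_prod hmix.1).symm
    _ ≤ log (L (a • μ₁ + b • μ₂)) := by
        rw [hL', hg.csSup_eq]
        exact log_le_log (prod_pos fun k _ => hmix.1 k) (hg.2 ⟨_, hmix, rfl⟩)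

theorem stmt2 (N : ℕ) (y : Fin N → ℝ) (i j : Fin N) (hij : y i ≠ y j)
    (L : ℝ → ℝ)
    (hL : ∀ μ, L μ = sSup {x : ℝ | ∃ w : Fin N → ℝ,
      (∀ k, 0 < w k) ∧ ∑ k, w k = 1 ∧ ∑ k, w k * y k = μ ∧ x = ∏ k, w k}) :
    StrictConcaveOn ℝ
      (Set.Ioo (Finset.univ.inf' ⟨i, Finset.mem_univ i⟩ y)
               (Finset.univ.sup' ⟨i, Finset.mem_univ i⟩ y))
      (fun μ => Real.log (L μ)) :=
  stmt2_general N y i L hL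
end

section
/- Let y_1,...,y_N be real numbers with min_i y_i < μ < max_i y_i, where not all y_i are equal. Define g(λ) = ∑_{i=1}^N (y_i − μ)/(1 + λ(y_i − μ)). Then g is strictly decreasing on the interval (−(max_i y_i − μ)^{-1}, (μ − min_i y_i)^{-1}), and there exists a unique λ in this interval with g(λ) = 0. -/
set_option maxHeartbeats 1000000

theorem stmt3 (N : ℕ) (y : Fin N → ℝ) (μ m M : ℝ)
    (hm : ∀ i, m ≤ y i) (hm' : ∃ i, y i = m)
    (hM : ∀ i, y i ≤ M) (hM' : ∃ i, y i = M)
    (hlt : m < μ) (hgt : μ < M) :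
    StrictAntiOn (fun lam => ∑ i, (y i - μ) / (1 + lam * (y i - μ)))
        (Set.Ioo (-(M - μ)⁻¹) ((μ - m)⁻¹)) ∧
    ∃! lam, lam ∈ Set.Ioo (-(M - μ)⁻¹) ((μ - m)⁻¹) ∧
      ∑ i, (y i - μ) / (1 + lam * (y i - μ)) = 0 := by
  have hMμ : 0 < M - μ := by linarith
  have hmμ : 0 < μ - m := by linarith
  set a : ℝ := -(M - μ)⁻¹ with ha_def
  set b : ℝ := (μ - m)⁻¹ with hb_def
  clear_value a b
  have ha0 : a < 0 := by rw [ha_def]; exact neg_neg_iff_pos.mpr (inv_pos.mpr hMμ)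
  have hb0 : 0 < b := by rw [hb_def]; exact inv_pos.mpr hmμ
  -- denominators are positive on the interval
  have hden : ∀ lam ∈ Set.Ioo a b, ∀ i, 0 < 1 + lam * (y i - μ) := by
    rintro lam ⟨h1, h2⟩ i
    have hMi := hM i
    have hmi := hm i
    rcases le_or_gt 0 lam with h | h
    · have hmul : lam * (μ - m) < 1 := by
        have := mul_lt_mul_of_pos_right h2 hmμ
        rwa [hb_def, inv_mul_cancel₀ (ne_of_gt hmμ)] at this
      nlinarith [mul_le_mul_of_nonneg_left (show m - μ ≤ y i - μ by linarith) h]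
    · have hmul : (-lam) * (M - μ) < 1 := by
        have hx : -lam < (M - μ)⁻¹ := by
          rw [ha_def] at h1; linarith
        have := mul_lt_mul_of_pos_right hx hMμ
        rwa [inv_mul_cancel₀ (ne_of_gt hMμ)] at this
      nlinarith [mul_le_mul_of_nonneg_left (show y i - μ ≤ M - μ by linarith)
        (show (0:ℝ) ≤ -lam by linarith)]
  -- strict antitonicity
  have hanti : StrictAntiOn (fun lam => ∑ i, (y i - μ) / (1 + lam * (y i - μ)))
      (Set.Ioo a b) := by
    intro s hs t ht hst
    obtain ⟨i0, hi0⟩ := hM'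
    apply Finset.sum_lt_sum
    · intro i _
      have hds := hden s hs i
      have hdt := hden t ht i
      rcases eq_or_ne (y i - μ) 0 with hc | hc
      · rw [hc]; simp
      · rw [div_le_div_iff₀ hdt hds]
        nlinarith [mul_pos (sub_pos.2 hst) (mul_self_pos.2 hc)]
    · refine ⟨i0, Finset.mem_univ _, ?_⟩
      have hds := hden s hs i0
      have hdt := hden t ht i0
      have hc : 0 < y i0 - μ := by rw [hi0]; linarith
      rw [div_lt_div_iff₀ hdt hds]
      nlinarith [mul_pos (sub_pos.2 hst) (mul_pos hc hc)]
  refine ⟨hanti, ?_⟩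
  obtain ⟨i0, hi0⟩ := hM'
  obtain ⟨i1, hi1⟩ := hm'
  -- choose lam1 near a with g lam1 > 0
  set ε₁ : ℝ := min (-a / 2) (1 / (N * (μ - m) + 1)) with hε₁_def
  have hKpos : (0:ℝ) < N * (μ - m) + 1 := by positivity
  have hε₁pos : 0 < ε₁ := by
    rw [hε₁_def]; exact lt_min (by linarith) (by positivity)
  set lam1 : ℝ := a + ε₁ with hlam1_def
  have hlam1a : a < lam1 := by rw [hlam1_def]; linarith
  have hlam1neg : lam1 < 0 := by
    have h : ε₁ ≤ -a / 2 := by rw [hε₁_def]; exact min_le_left _ _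
    rw [hlam1_def]; linarith
  have hlam1mem : lam1 ∈ Set.Ioo a b := ⟨hlam1a, by linarith⟩
  -- choose lam2 near b with g lam2 < 0
  set ε₂ : ℝ := min (b / 2) (1 / (N * (M - μ) + 1)) with hε₂_def
  have hK2pos : (0:ℝ) < N * (M - μ) + 1 := by positivity
  have hε₂pos : 0 < ε₂ := by
    rw [hε₂_def]; exact lt_min (by linarith) (by positivity)
  set lam2 : ℝ := b - ε₂ with hlam2_def
  have hlam2b : lam2 < b := by rw [hlam2_def]; linarith
  have hlam2pos : 0 < lam2 := by
    have h : ε₂ ≤ b / 2 := by rw [hε₂_def]; exact min_le_left _ _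
    rw [hlam2_def]; linarith
  have hlam2mem : lam2 ∈ Set.Ioo a b := ⟨by linarith, hlam2b⟩
  -- value at lam1 is positive
  have hg1 : 0 < ∑ i, (y i - μ) / (1 + lam1 * (y i - μ)) := by
    have hterm_lb : ∀ i, m - μ ≤ (y i - μ) / (1 + lam1 * (y i - μ)) := by
      intro i
      have hd := hden lam1 hlam1mem i
      rcases le_or_gt 0 (y i - μ) with hc | hc
      · have : 0 ≤ (y i - μ) / (1 + lam1 * (y i - μ)) := div_nonneg hc hd.le
        linarith
      · have hge : y i - μ ≤ (y i - μ) / (1 + lam1 * (y i - μ)) := by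
          rw [le_div_iff₀ hd]
          have hx : lam1 * ((y i - μ) * (y i - μ)) ≤ 0 :=
            mul_nonpos_of_nonpos_of_nonneg hlam1neg.le (mul_self_nonneg _)
          nlinarith
        have := hm i
        linarith
    have hden1 : 1 + lam1 * (M - μ) = ε₁ * (M - μ) := by
      simp only [hlam1_def, ha_def]
      field_simp
      ring
    have hterm0 : (y i0 - μ) / (1 + lam1 * (y i0 - μ)) = 1 / ε₁ := by
      rw [hi0, hden1]
      rw [div_eq_div_iff (by positivity) hε₁pos.ne']
      ring
    have hbig : N * (μ - m) + 1 ≤ 1 / ε₁ := by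
      rw [le_div_iff₀ hε₁pos]
      have h2 : ε₁ ≤ 1 / (N * (μ - m) + 1) := by rw [hε₁_def]; exact min_le_right _ _
      calc (N * (μ - m) + 1) * ε₁ ≤ (N * (μ - m) + 1) * (1 / (N * (μ - m) + 1)) :=
            mul_le_mul_of_nonneg_left h2 hKpos.le
        _ = 1 := by field_simp
    have hsplit := Finset.add_sum_erase Finset.univ
      (fun i => (y i - μ) / (1 + lam1 * (y i - μ))) (Finset.mem_univ i0)
    have hrest : ∑ i ∈ Finset.univ.erase i0, (y i - μ) / (1 + lam1 * (y i - μ))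
        ≥ ((Finset.univ.erase i0).card : ℝ) * (m - μ) := by
      calc ∑ i ∈ Finset.univ.erase i0, (y i - μ) / (1 + lam1 * (y i - μ))
          ≥ ∑ _i ∈ Finset.univ.erase i0, (m - μ) :=
            Finset.sum_le_sum (fun i _ => hterm_lb i)
        _ = ((Finset.univ.erase i0).card : ℝ) * (m - μ) := by
            rw [Finset.sum_const, nsmul_eq_mul]
    have hcard : ((Finset.univ.erase i0).card : ℝ) ≤ N := by
      have := Finset.card_erase_le (a := i0) (s := (Finset.univ : Finset (Fin N)))
      have h2 : (Finset.univ : Finset (Fin N)).card = N := by simp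
      exact_mod_cast le_trans this (le_of_eq h2)
    have hrest2 : ∑ i ∈ Finset.univ.erase i0, (y i - μ) / (1 + lam1 * (y i - μ))
        ≥ (N : ℝ) * (m - μ) := by
      refine le_trans ?_ hrest
      have : (m - μ) < 0 := by linarith
      nlinarith
    rw [← hsplit]
    rw [hterm0]
    linarith
  -- value at lam2 is negative
  have hg2 : ∑ i, (y i - μ) / (1 + lam2 * (y i - μ)) < 0 := by
    have hterm_ub : ∀ i, (y i - μ) / (1 + lam2 * (y i - μ)) ≤ M - μ := by
      intro i
      have hd := hden lam2 hlam2mem i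
      rcases le_or_gt (y i - μ) 0 with hc | hc
      · have : (y i - μ) / (1 + lam2 * (y i - μ)) ≤ 0 := div_nonpos_of_nonpos_of_nonneg hc hd.le
        linarith
      · have hle : (y i - μ) / (1 + lam2 * (y i - μ)) ≤ y i - μ := by
          rw [div_le_iff₀ hd]
          have hx : 0 ≤ lam2 * ((y i - μ) * (y i - μ)) :=
            mul_nonneg hlam2pos.le (mul_self_nonneg _)
          nlinarith
        have := hM i
        linarith
    have hden2 : 1 + lam2 * (m - μ) = ε₂ * (μ - m) := by
      simp only [hlam2_def, hb_def]
      field_simp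
      try ring
    have hterm1 : (y i1 - μ) / (1 + lam2 * (y i1 - μ)) = -(1 / ε₂) := by
      rw [hi1, hden2]
      rw [div_eq_iff (by positivity)]
      field_simp
      ring
    have hbig : N * (M - μ) + 1 ≤ 1 / ε₂ := by
      rw [le_div_iff₀ hε₂pos]
      have h2 : ε₂ ≤ 1 / (N * (M - μ) + 1) := by rw [hε₂_def]; exact min_le_right _ _
      calc (N * (M - μ) + 1) * ε₂ ≤ (N * (M - μ) + 1) * (1 / (N * (M - μ) + 1)) :=
            mul_le_mul_of_nonneg_left h2 hK2pos.le
        _ = 1 := by field_simp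
    have hsplit := Finset.add_sum_erase Finset.univ
      (fun i => (y i - μ) / (1 + lam2 * (y i - μ))) (Finset.mem_univ i1)
    have hrest : ∑ i ∈ Finset.univ.erase i1, (y i - μ) / (1 + lam2 * (y i - μ))
        ≤ ((Finset.univ.erase i1).card : ℝ) * (M - μ) := by
      calc ∑ i ∈ Finset.univ.erase i1, (y i - μ) / (1 + lam2 * (y i - μ))
          ≤ ∑ _i ∈ Finset.univ.erase i1, (M - μ) :=
            Finset.sum_le_sum (fun i _ => hterm_ub i)
        _ = ((Finset.univ.erase i1).card : ℝ) * (M - μ) := by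
            rw [Finset.sum_const, nsmul_eq_mul]
    have hcard : ((Finset.univ.erase i1).card : ℝ) ≤ N := by
      have := Finset.card_erase_le (a := i1) (s := (Finset.univ : Finset (Fin N)))
      have h2 : (Finset.univ : Finset (Fin N)).card = N := by simp
      exact_mod_cast le_trans this (le_of_eq h2)
    have hrest2 : ∑ i ∈ Finset.univ.erase i1, (y i - μ) / (1 + lam2 * (y i - μ))
        ≤ (N : ℝ) * (M - μ) := by
      refine le_trans hrest ?_
      nlinarith
    rw [← hsplit]
    rw [hterm1]
    linarith
  have h12 : lam1 < lam2 := lt_trans hlam1neg hlam2pos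
  have hsub : Set.Icc lam1 lam2 ⊆ Set.Ioo a b := fun x hx =>
    ⟨lt_of_lt_of_le hlam1a hx.1, lt_of_le_of_lt hx.2 hlam2b⟩
  have hcont : ContinuousOn (fun lam => ∑ i, (y i - μ) / (1 + lam * (y i - μ)))
      (Set.Icc lam1 lam2) := by
    apply continuousOn_finset_sum
    intro i _
    apply ContinuousOn.div continuousOn_const
    · exact (continuous_const.add (continuous_id.mul continuous_const)).continuousOn
    · intro x hx
      exact (hden x (hsub hx) i).ne'
  have hivt := intermediate_value_Icc' h12.le hcont
  have h0mem : (0:ℝ) ∈ Set.Icc (∑ i, (y i - μ) / (1 + lam2 * (y i - μ)))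
      (∑ i, (y i - μ) / (1 + lam1 * (y i - μ))) := ⟨hg2.le, hg1.le⟩
  obtain ⟨lam, hlamIcc, hg0⟩ := hivt h0mem
  refine ⟨lam, ⟨hsub hlamIcc, hg0⟩, ?_⟩
  rintro l' ⟨hl'mem, hl'0⟩
  exact hanti.injOn hl'mem (hsub hlamIcc) (hl'0.trans hg0.symm)
end
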